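/- arXiv:2309.05143 — 4 statements merged into one kernel-verified Lean document; each statement's English description precedes it below -/
import Mathlib

section
/- Suppose λ₁ ≤ ρ < (λ₁+λ₂)/2 and let cΘ ∈ [0,1]. Let x be a unit vector with f(x) ≤ ρ and let v be a unit vector with vᵀx = 0 such that |vᵀA x| ≤ cΘ·‖v‖_A·‖x‖_A. Then the quantity J₂ = (8(vᵀM x)/(xᵀM x)²)·vᵀ(Ax − f(x)Mx) satisfies |J₂| ≤ 8κ_ν·ρ·((ρ−λ₁)/λ₁ + √((ρ−λ₁)/λ₁)·cΘ), where κ_ν = ν_max/ν_min. -/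
/-!
In the eigen-coordinates `cᵢ = uᵢᵀMx`, `dᵢ = uᵢᵀMv` the residual `r = Ax - f(x)Mx` satisfies
`vᵀr = ∑ (λᵢ - f(x)) dᵢ cᵢ`, so Cauchy–Schwarz in the `A`-inner product gives
`(vᵀr)² ≤ ‖v‖²_A ‖r‖²_{A⁻¹}` with `‖r‖²_{A⁻¹} = ∑ (λᵢ - f(x))² / λᵢ cᵢ²`. The termwise bound
`(λᵢ - f)² / λᵢ ≤ (f - λ₁)(ρ - λ₁)/λ₁ + (λᵢ - λ₁)` together with `∑ (λᵢ - λ₁) cᵢ² = (f - λ₁)‖x‖²_M`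
yields `‖r‖²_{A⁻¹} ≤ ρ (ρ - λ₁)/λ₁ ‖x‖²_M`. Finally `f(x) vᵀMx = vᵀAx - vᵀr`, so the angle
condition bounds `f(x) |vᵀMx| |vᵀr|`, and `f(x) ‖x‖²_M = ‖x‖²_A ≥ ν_min` turns this into the bound
on `J₂`.
-/

open Matrix

section EigenCoordinates

variable {ι : Type*} [Fintype ι] [DecidableEq ι] {A M : Matrix ι ι ℝ} {lam : ι → ℝ}
  {u : ι → ι → ℝ}

theorem eq_sum_smul_of_orthonormal (horth : ∀ i j, u i ⬝ᵥ M *ᵥ u j = if i = j then 1 else 0)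
    (z : ι → ℝ) : z = ∑ i, (u i ⬝ᵥ M *ᵥ z) • u i := by
  have hgram : of u * M * (of u)ᵀ = 1 := by
    ext i j
    change u i ᵥ* M ⬝ᵥ u j = _
    rw [← dotProduct_mulVec, horth, one_apply]
  have hinv : (of u)ᵀ * (of u * M) = 1 := mul_eq_one_comm.mp hgram
  calc z = (of u)ᵀ *ᵥ ((of u * M) *ᵥ z) := by rw [mulVec_mulVec, hinv, one_mulVec]
    _ = ∑ i, (u i ⬝ᵥ M *ᵥ z) • u i := by
      rw [mulVec_transpose, vecMul_eq_sum, ← mulVec_mulVec]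
      rfl

theorem dotProduct_mulVec_eq_sum_of_orthonormal
    (horth : ∀ i j, u i ⬝ᵥ M *ᵥ u j = if i = j then 1 else 0) (y z : ι → ℝ) :
    y ⬝ᵥ M *ᵥ z = ∑ i, (u i ⬝ᵥ M *ᵥ y) * (u i ⬝ᵥ M *ᵥ z) := by
  conv_lhs => rw [eq_sum_smul_of_orthonormal horth y]
  simp only [sum_dotProduct, smul_dotProduct, smul_eq_mul]

theorem dotProduct_mulVec_eq_sum_eigenvalue_mul_of_orthonormal
    (heig : ∀ i, A *ᵥ u i = lam i • (M *ᵥ u i))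
    (horth : ∀ i j, u i ⬝ᵥ M *ᵥ u j = if i = j then 1 else 0) (y z : ι → ℝ) :
    y ⬝ᵥ A *ᵥ z = ∑ i, lam i * ((u i ⬝ᵥ M *ᵥ y) * (u i ⬝ᵥ M *ᵥ z)) := by
  have hcoord : ∀ i, y ⬝ᵥ M *ᵥ u i = u i ⬝ᵥ M *ᵥ y := fun i => by
    simp [dotProduct_mulVec_eq_sum_of_orthonormal horth y (u i), horth]
  conv_lhs => rw [eq_sum_smul_of_orthonormal horth z]
  simp only [mulVec_sum, mulVec_smul, heig, dotProduct_sum, dotProduct_smul, smul_eq_mul, hcoord]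
  exact Finset.sum_congr rfl fun i _ => by ring

end EigenCoordinates

section EigenCoordinateBounds

variable {ι : Type*} [Fintype ι]

theorem sq_sum_mul_mul_le_of_pos {w g c d : ι → ℝ} (hw : ∀ i, 0 < w i) :
    (∑ i, g i * (d i * c i)) ^ 2 ≤ (∑ i, w i * d i ^ 2) * ∑ i, g i ^ 2 / w i * c i ^ 2 :=
  Finset.sum_sq_le_sum_mul_sum_of_sq_le_mul _ (fun i _ => by have := hw i; positivity)
    (fun i _ => by have := hw i; positivity) fun i _ => le_of_eq <| by
      have := (hw i).ne'
      field_simp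

theorem sq_sub_div_le {l₀ μ f ρ : ℝ} (hl₀ : 0 < l₀) (hμ : l₀ ≤ μ) (hf : l₀ ≤ f) (hfρ : f ≤ ρ) :
    (μ - f) ^ 2 / μ ≤ (f - l₀) * (ρ - l₀) / l₀ + (μ - l₀) := by
  have hμ₀ : 0 < μ := hl₀.trans_le hμ
  have hnum : 0 ≤ (f - l₀) * (ρ - l₀) := mul_nonneg (by linarith) (by linarith)
  rcases le_total f μ with hfμ | hμf
  · have : (μ - f) ^ 2 / μ ≤ μ - l₀ := by
      rw [div_le_iff₀ hμ₀, sq]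
      exact mul_le_mul (by linarith) (by linarith) (by linarith) (by linarith)
    have : 0 ≤ (f - l₀) * (ρ - l₀) / l₀ := div_nonneg hnum hl₀.le
    linarith
  · have : (μ - f) ^ 2 / μ ≤ (f - l₀) * (ρ - l₀) / l₀ := by
      rw [← neg_sub, neg_sq, sq]
      exact div_le_div₀ hnum (mul_le_mul (by linarith) (by linarith) (by linarith) (by linarith))
        hl₀ hμ
    linarith

theorem sum_sq_sub_div_mul_sq_le {lam c : ι → ℝ} {i₀ : ι} {f ρ : ℝ} (hlam₀ : 0 < lam i₀)
    (hle : ∀ i, lam i₀ ≤ lam i) (hc : 0 < ∑ i, c i ^ 2)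
    (hf : ∑ i, lam i * c i ^ 2 = f * ∑ i, c i ^ 2) (hfρ : f ≤ ρ) :
    ∑ i, (lam i - f) ^ 2 / lam i * c i ^ 2 ≤ ρ * ((ρ - lam i₀) / lam i₀) * ∑ i, c i ^ 2 := by
  have hf₀ : lam i₀ ≤ f := by
    refine le_of_mul_le_mul_right ?_ hc
    rw [← hf, Finset.mul_sum]
    exact Finset.sum_le_sum fun i _ => mul_le_mul_of_nonneg_right (hle i) (sq_nonneg _)
  calc ∑ i, (lam i - f) ^ 2 / lam i * c i ^ 2
      ≤ ∑ i, ((f - lam i₀) * (ρ - lam i₀) / lam i₀ + (lam i - lam i₀)) * c i ^ 2 :=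
        Finset.sum_le_sum fun i _ =>
          mul_le_mul_of_nonneg_right (sq_sub_div_le hlam₀ (hle i) hf₀ hfρ) (sq_nonneg _)
    _ = (f - lam i₀) * (ρ / lam i₀) * ∑ i, c i ^ 2 := by
        simp only [add_mul, sub_mul, Finset.sum_add_distrib, Finset.sum_sub_distrib,
          ← Finset.mul_sum, hf]
        field_simp
        ring
    _ ≤ (ρ - lam i₀) * (ρ / lam i₀) * ∑ i, c i ^ 2 := by
        have : 0 ≤ ρ := hlam₀.le.trans (hf₀.trans hfρ)
        gcongr
    _ = ρ * ((ρ - lam i₀) / lam i₀) * ∑ i, c i ^ 2 := by ring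

theorem sq_dotProduct_residual_le [DecidableEq ι] {A M : Matrix ι ι ℝ} {lam : ι → ℝ}
    {u : ι → ι → ℝ} {i₀ : ι} (heig : ∀ i, A *ᵥ u i = lam i • (M *ᵥ u i))
    (horth : ∀ i j, u i ⬝ᵥ M *ᵥ u j = if i = j then 1 else 0) (hlam₀ : 0 < lam i₀)
    (hle : ∀ i, lam i₀ ≤ lam i) {x : ι → ℝ} (v : ι → ℝ) {ρ : ℝ} (hx : 0 < x ⬝ᵥ M *ᵥ x)
    (hfx : (x ⬝ᵥ A *ᵥ x) / (x ⬝ᵥ M *ᵥ x) ≤ ρ) :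
    (v ⬝ᵥ (A *ᵥ x - ((x ⬝ᵥ A *ᵥ x) / (x ⬝ᵥ M *ᵥ x)) • (M *ᵥ x))) ^ 2
      ≤ (v ⬝ᵥ A *ᵥ v) * (ρ * ((ρ - lam i₀) / lam i₀) * (x ⬝ᵥ M *ᵥ x)) := by
  set f := (x ⬝ᵥ A *ᵥ x) / (x ⬝ᵥ M *ᵥ x)
  have hfa : f * (x ⬝ᵥ M *ᵥ x) = x ⬝ᵥ A *ᵥ x := div_mul_cancel₀ _ hx.ne'
  set c := fun i => u i ⬝ᵥ M *ᵥ x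
  set d := fun i => u i ⬝ᵥ M *ᵥ v
  have hM := dotProduct_mulVec_eq_sum_of_orthonormal horth
  have hA := dotProduct_mulVec_eq_sum_eigenvalue_mul_of_orthonormal heig horth
  have ha : x ⬝ᵥ M *ᵥ x = ∑ i, c i ^ 2 := by rw [hM]; simp only [sq]; rfl
  have hα : x ⬝ᵥ A *ᵥ x = ∑ i, lam i * c i ^ 2 := by rw [hA]; simp only [sq]; rfl
  have hβ : v ⬝ᵥ A *ᵥ v = ∑ i, lam i * d i ^ 2 := by rw [hA]; simp only [sq]; rfl
  have hres : v ⬝ᵥ (A *ᵥ x - f • (M *ᵥ x)) = ∑ i, (lam i - f) * (d i * c i) := by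
    rw [dotProduct_sub, dotProduct_smul, hA, hM, smul_eq_mul, Finset.mul_sum,
      ← Finset.sum_sub_distrib]
    exact Finset.sum_congr rfl fun i _ => by ring
  have hlam : ∀ i, 0 < lam i := fun i => hlam₀.trans_le (hle i)
  rw [hres, hβ, ha]
  calc _ ≤ (∑ i, lam i * d i ^ 2) * ∑ i, (lam i - f) ^ 2 / lam i * c i ^ 2 :=
        sq_sum_mul_mul_le_of_pos hlam
    _ ≤ _ := by
        refine mul_le_mul_of_nonneg_left
          (sum_sq_sub_div_mul_sq_le hlam₀ hle (ha ▸ hx) (by rw [← hα, ← ha, hfa]) hfx) ?_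
        exact Finset.sum_nonneg fun i _ => by have := hlam i; positivity

end EigenCoordinateBounds

theorem abs_mul_div_sq_mul_residual_le {a α β q m ρ ε νmin νmax cΘ : ℝ} (ha : 0 < a)
    (hνmin : 0 < νmin) (hα : νmin ≤ α) (hαρ : α ≤ ρ * a) (hβ₀ : 0 ≤ β) (hβ : β ≤ νmax)
    (hρ : 0 ≤ ρ) (hε : 0 ≤ ε) (hcΘ : 0 ≤ cΘ) (hq : |q| ≤ cΘ * √β * √α)
    (hT : (q - α / a * m) ^ 2 ≤ β * (ρ * ε * a)) :
    |8 * m / a ^ 2 * (q - α / a * m)| ≤ 8 * (νmax / νmin) * ρ * (ε + √ε * cΘ) := by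
  set T := q - α / a * m
  have hα₀ : 0 < α := hνmin.trans_le hα
  have hνmax : 0 ≤ νmax := hβ₀.trans hβ
  have hTsq : T ^ 2 ≤ νmax * ρ * ε * a := by
    calc T ^ 2 ≤ β * (ρ * ε * a) := hT
      _ ≤ νmax * (ρ * ε * a) := by gcongr
      _ = νmax * ρ * ε * a := by ring
  have hqT : |q| * |T| ≤ cΘ * νmax * ρ * √ε * a := by
    rw [← pow_le_pow_iff_left₀ (by positivity) (by positivity) two_ne_zero]
    calc (|q| * |T|) ^ 2 = |q| ^ 2 * T ^ 2 := by rw [mul_pow, sq_abs T]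
      _ ≤ (cΘ * √β * √α) ^ 2 * (β * (ρ * ε * a)) := by gcongr
      _ = cΘ ^ 2 * β * α * (β * (ρ * ε * a)) := by
        rw [mul_pow, mul_pow, Real.sq_sqrt hβ₀, Real.sq_sqrt hα₀.le]
      _ ≤ cΘ ^ 2 * νmax * (ρ * a) * (νmax * (ρ * ε * a)) := by gcongr
      _ = (cΘ * νmax * ρ * √ε * a) ^ 2 := by rw [mul_pow, mul_pow, Real.sq_sqrt hε]; ring
  have hmT : α / a * (|m| * |T|) ≤ |q| * |T| + T ^ 2 := by
    have : |α / a * m| ≤ |q| + |T| := by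
      rw [show α / a * m = q - T by ring]
      exact abs_sub _ _
    rw [abs_mul, abs_of_pos (by positivity)] at this
    calc α / a * (|m| * |T|) = α / a * |m| * |T| := by ring
      _ ≤ (|q| + |T|) * |T| := by gcongr
      _ = |q| * |T| + T ^ 2 := by rw [add_mul, abs_mul_abs_self, sq]
  have key : νmin * (|m| * |T|) ≤ νmax * ρ * (ε + √ε * cΘ) * a ^ 2 := by
    calc νmin * (|m| * |T|) ≤ α * (|m| * |T|) := by gcongr
      _ = a * (α / a * (|m| * |T|)) := by field_simp
      _ ≤ a * (cΘ * νmax * ρ * √ε * a + νmax * ρ * ε * a) := by gcongr; linarith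
      _ = νmax * ρ * (ε + √ε * cΘ) * a ^ 2 := by ring
  calc |8 * m / a ^ 2 * T| = 8 * (νmin * (|m| * |T|)) / (νmin * a ^ 2) := by
        rw [abs_mul, abs_div, abs_mul, abs_of_pos (by positivity : (0 : ℝ) < a ^ 2)]
        field_simp
        ring
    _ ≤ 8 * (νmax * ρ * (ε + √ε * cΘ) * a ^ 2) / (νmin * a ^ 2) := by gcongr
    _ = 8 * (νmax / νmin) * ρ * (ε + √ε * cΘ) := by field_simp

theorem statement_14_general {n : ℕ}
    (A M : Matrix (Fin (n+2)) (Fin (n+2)) ℝ)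
    (hM : M.PosDef)
    (lam : Fin (n+2) → ℝ) (u : Fin (n+2) → (Fin (n+2) → ℝ))
    (hlam_pos : 0 < lam 0) (hmono : Monotone lam)
    (heig : ∀ i, A *ᵥ u i = lam i • (M *ᵥ u i))
    (horth : ∀ i j, u i ⬝ᵥ M *ᵥ u j = if i = j then 1 else 0)
    (νmin νmax : ℝ) (hνmin : 0 < νmin)
    (hν : ∀ z, νmin * (z ⬝ᵥ z) ≤ z ⬝ᵥ A *ᵥ z ∧ z ⬝ᵥ A *ᵥ z ≤ νmax * (z ⬝ᵥ z))
    (ρ : ℝ) (hρ1 : lam 0 ≤ ρ)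
    (cΘ : ℝ) (hcΘ0 : 0 ≤ cΘ)
    (x : Fin (n+2) → ℝ) (hxunit : x ⬝ᵥ x = 1)
    (hfx : (x ⬝ᵥ A *ᵥ x) / (x ⬝ᵥ M *ᵥ x) ≤ ρ)
    (v : Fin (n+2) → ℝ) (hvunit : v ⬝ᵥ v = 1)
    (hangle : |v ⬝ᵥ A *ᵥ x| ≤ cΘ * Real.sqrt (v ⬝ᵥ A *ᵥ v) * Real.sqrt (x ⬝ᵥ A *ᵥ x))
    (J₂ : ℝ)
    (hJ₂ : J₂ = 8 * (v ⬝ᵥ M *ᵥ x) / (x ⬝ᵥ M *ᵥ x) ^ 2 *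
      (v ⬝ᵥ (A *ᵥ x - ((x ⬝ᵥ A *ᵥ x) / (x ⬝ᵥ M *ᵥ x)) • (M *ᵥ x)))) :
    |J₂| ≤ 8 * (νmax / νmin) * ρ *
      ((ρ - lam 0) / lam 0 + Real.sqrt ((ρ - lam 0) / lam 0) * cΘ) := by
  have hx : x ≠ 0 := by
    rintro rfl
    simp at hxunit
  have ha : 0 < x ⬝ᵥ M *ᵥ x := by simpa using hM.dotProduct_mulVec_pos hx
  have hα : νmin ≤ x ⬝ᵥ A *ᵥ x := by simpa [hxunit] using (hν x).1
  have hβ₀ : 0 ≤ v ⬝ᵥ A *ᵥ v := hνmin.le.trans (by simpa [hvunit] using (hν v).1)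
  have hβ : v ⬝ᵥ A *ᵥ v ≤ νmax := by simpa [hvunit] using (hν v).2
  have hres := sq_dotProduct_residual_le heig horth hlam_pos (fun i => hmono (Fin.zero_le i))
    v ha hfx
  rw [dotProduct_sub, dotProduct_smul, smul_eq_mul] at hres
  rw [hJ₂, dotProduct_sub, dotProduct_smul, smul_eq_mul]
  exact abs_mul_div_sq_mul_residual_le ha hνmin hα ((div_le_iff₀ ha).mp hfx) hβ₀ hβ
    (hlam_pos.le.trans hρ1) (div_nonneg (sub_nonneg.mpr hρ1) hlam_pos.le) hcΘ0 hangle hres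

/-- Bound on the term J₂ in the Hessian of the preconditioned Rayleigh quotient. -/
theorem statement_14 {n : ℕ}
    (A M : Matrix (Fin (n+2)) (Fin (n+2)) ℝ)
    (hA : A.PosDef) (hM : M.PosDef)
    (lam : Fin (n+2) → ℝ) (u : Fin (n+2) → (Fin (n+2) → ℝ))
    (hlam_pos : 0 < lam 0) (hgap : lam 0 < lam 1) (hmono : Monotone lam)
    (heig : ∀ i, A *ᵥ u i = lam i • (M *ᵥ u i))
    (horth : ∀ i j, u i ⬝ᵥ M *ᵥ u j = if i = j then 1 else 0)
    (νmin νmax : ℝ) (hνmin : 0 < νmin) (hνmax : 0 < νmax)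
    (hν : ∀ z, νmin * (z ⬝ᵥ z) ≤ z ⬝ᵥ A *ᵥ z ∧ z ⬝ᵥ A *ᵥ z ≤ νmax * (z ⬝ᵥ z))
    (ρ : ℝ) (hρ1 : lam 0 ≤ ρ) (hρ2 : ρ < (lam 0 + lam 1) / 2)
    (cΘ : ℝ) (hcΘ0 : 0 ≤ cΘ) (hcΘ1 : cΘ ≤ 1)
    (x : Fin (n+2) → ℝ) (hxunit : x ⬝ᵥ x = 1)
    (hfx : (x ⬝ᵥ A *ᵥ x) / (x ⬝ᵥ M *ᵥ x) ≤ ρ)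
    (v : Fin (n+2) → ℝ) (hvunit : v ⬝ᵥ v = 1) (hvx : v ⬝ᵥ x = 0)
    (hangle : |v ⬝ᵥ A *ᵥ x| ≤ cΘ * Real.sqrt (v ⬝ᵥ A *ᵥ v) * Real.sqrt (x ⬝ᵥ A *ᵥ x))
    (J₂ : ℝ)
    (hJ₂ : J₂ = 8 * (v ⬝ᵥ M *ᵥ x) / (x ⬝ᵥ M *ᵥ x) ^ 2 *
      (v ⬝ᵥ (A *ᵥ x - ((x ⬝ᵥ A *ᵥ x) / (x ⬝ᵥ M *ᵥ x)) • (M *ᵥ x)))) :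
    |J₂| ≤ 8 * (νmax / νmin) * ρ *
      ((ρ - lam 0) / lam 0 + Real.sqrt ((ρ - lam 0) / lam 0) * cΘ) :=
  statement_14_general A M hM lam u hlam_pos hmono heig horth νmin νmax hνmin hν ρ hρ1 cΘ hcΘ0 x
    hxunit hfx v hvunit hangle J₂ hJ₂
end

section
/- Suppose λ₁ ≤ ρ < (λ₁+λ₂)/2, and let σ, ς, ϱ ≥ 0 and cΘ ∈ [0,1] be constants with ς < σ and ϱ > ρ such that: (i) every nonzero y with f(y) ≤ ρ satisfies |yᵀAy/(yᵀy) − σ| ≤ ς; (ii) every pair of nonzero vectors y, w with wᵀy = 0 and f(y) ≤ ρ satisfies f(w) ≥ ϱ and |wᵀAy| ≤ cΘ·‖w‖_A·‖y‖_A. Then for every unit vector x with f(x) ≤ ρ and every unit vector v with vᵀx = 0, the quantity J₁ − J₂, where J₁ = 2(vᵀAv)·f(x)/(xᵀAx)·(1 − f(x)/f(v)) and J₂ = (8(vᵀMx)/(xᵀMx)²)·vᵀ(Ax − f(x)Mx), satisfies μ_B ≤ J₁ − J₂ ≤ L_B with μ_B = (2ν_min·λ₁/(σ+ς))·(1 −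 ρ/ϱ) − C_X, L_B = (2ν_max·ρ/(σ−ς))·(1 − λ₁/λₙ) + C_X, and C_X = 8κ_ν·ρ·((ρ−λ₁)/λ₁ + √((ρ−λ₁)/λ₁)·cΘ), where κ_ν = ν_max/ν_min. -/
/-!
The two factors `2 (vᵀAv) f(x) / (xᵀAx)` and `1 - f(x) / f(v)` of `J₁` are bounded separately
using (i), (ii), `ν_min ≤ vᵀAv ≤ ν_max` and `λ₁ ≤ f ≤ λₙ`. For `J₂`, expand in the `M`-orthonormal
eigenbasis: with `cᵢ = uᵢᵀMx` and `dᵢ = uᵢᵀMv` the residual `r = Ax - f(x)Mx` satisfies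
`vᵀr = ∑ (λᵢ - f(x)) dᵢ cᵢ`, so Cauchy–Schwarz with weights `λᵢ`, together with `1/λᵢ ≤ 1/λ₁`, gives
`(vᵀr)² ≤ (vᵀAv)(xᵀAx)(f(x) - λ₁)/λ₁`. Then `vᵀMx` is controlled through
`f(x) vᵀMx = vᵀAx - vᵀr`, where `|vᵀAx|` is bounded by the `cΘ` angle condition.
-/

open Matrix Finset

lemma sq_sum_sub_mul_le {ι : Type*} [Fintype ι] {lam c d : ι → ℝ} {l₀ : ℝ} (hl₀ : 0 < l₀)
    (hlam : ∀ i, l₀ ≤ lam i) (F : ℝ) :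
    (∑ i, (lam i - F) * (d i * c i)) ^ 2 ≤ (∑ i, lam i * (d i * d i)) *
      ∑ i, (lam i - 2 * F + F ^ 2 / l₀) * (c i * c i) := by
  have hpos : ∀ i, 0 < lam i := fun i => hl₀.trans_le (hlam i)
  calc (∑ i, (lam i - F) * (d i * c i)) ^ 2
      ≤ (∑ i, lam i * (d i * d i)) * ∑ i, (lam i - F) ^ 2 * (c i * c i) / lam i :=
        sum_sq_le_sum_mul_sum_of_sq_le_mul _
          (fun i _ => mul_nonneg (hpos i).le (mul_self_nonneg _))
          (fun i _ => div_nonneg (mul_nonneg (sq_nonneg _) (mul_self_nonneg _)) (hpos i).le)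
          fun i _ => le_of_eq <| by field_simp [(hpos i).ne']
    _ ≤ _ := by
        gcongr with i
        · exact sum_nonneg fun i _ => mul_nonneg (hpos i).le (mul_self_nonneg _)
        · calc (lam i - F) ^ 2 * (c i * c i) / lam i
              = (lam i - 2 * F + F ^ 2 / lam i) * (c i * c i) := by
                field_simp [(hpos i).ne']; ring
            _ ≤ _ := by
                gcongr
                · exact mul_self_nonneg _
                · exact hlam i

namespace Matrix

variable {ι : Type*} [Fintype ι]

lemma dotProduct_mulVec_comm_of_isHermitian {S : Matrix ι ι ℝ} (hS : S.IsHermitian)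
    (w z : ι → ℝ) : w ⬝ᵥ S *ᵥ z = z ⬝ᵥ S *ᵥ w := by
  rw [dotProduct_mulVec, ← mulVec_transpose, ← conjTranspose_eq_transpose_of_trivial, hS,
    dotProduct_comm]

section Orthonormal

variable [DecidableEq ι] {M : Matrix ι ι ℝ} {u : ι → ι → ℝ}

lemma dotProduct_mulVec_sum_smul (horth : ∀ i j, u i ⬝ᵥ M *ᵥ u j = if i = j then 1 else 0)
    (c : ι → ℝ) (j : ι) : u j ⬝ᵥ M *ᵥ ∑ i, c i • u i = c j := by
  simp [mulVec_sum, dotProduct_sum, mulVec_smul, horth]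

lemma linearIndependent_of_orthonormal
    (horth : ∀ i j, u i ⬝ᵥ M *ᵥ u j = if i = j then 1 else 0) : LinearIndependent ℝ u :=
  Fintype.linearIndependent_iff.2 fun c hc j => by
    simpa [hc] using (dotProduct_mulVec_sum_smul horth c j).symm

lemma sum_dotProduct_mulVec_smul (horth : ∀ i j, u i ⬝ᵥ M *ᵥ u j = if i = j then 1 else 0)
    (z : ι → ℝ) : ∑ i, (u i ⬝ᵥ M *ᵥ z) • u i = z := by
  let b := basisOfLinearIndependentOfCardEqFinrank' u (linearIndependent_of_orthonormal horth)
    (by simp)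
  have hz : ∑ i, b.repr z i • u i = z := by
    simpa [b] using b.sum_repr z
  have hc : ∀ j, u j ⬝ᵥ M *ᵥ z = b.repr z j := fun j => by
    rw [← dotProduct_mulVec_sum_smul horth (b.repr z) j, hz]
  simp_rw [hc]
  exact hz

lemma dotProduct_mulVec_eq_sum (horth : ∀ i j, u i ⬝ᵥ M *ᵥ u j = if i = j then 1 else 0)
    (w z : ι → ℝ) : w ⬝ᵥ M *ᵥ z = ∑ i, (u i ⬝ᵥ M *ᵥ w) * (u i ⬝ᵥ M *ᵥ z) := by
  conv_lhs => rw [← sum_dotProduct_mulVec_smul horth w]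
  simp [sum_dotProduct]

lemma dotProduct_mulVec_eq_sum_eigen {A : Matrix ι ι ℝ} {lam : ι → ℝ} (hM : M.IsHermitian)
    (horth : ∀ i j, u i ⬝ᵥ M *ᵥ u j = if i = j then 1 else 0)
    (heig : ∀ i, A *ᵥ u i = lam i • (M *ᵥ u i)) (w z : ι → ℝ) :
    w ⬝ᵥ A *ᵥ z = ∑ i, lam i * ((u i ⬝ᵥ M *ᵥ w) * (u i ⬝ᵥ M *ᵥ z)) := by
  conv_lhs => rw [← sum_dotProduct_mulVec_smul horth z]
  simp only [mulVec_sum, mulVec_smul, heig, dotProduct_sum, dotProduct_smul, smul_eq_mul,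
    dotProduct_mulVec_comm_of_isHermitian hM w]
  exact sum_congr rfl fun i _ => by ring

end Orthonormal

noncomputable def rayleighQuotient (A M : Matrix ι ι ℝ) (x : ι → ℝ) : ℝ :=
  (x ⬝ᵥ A *ᵥ x) / (x ⬝ᵥ M *ᵥ x)

section Eigenbasis

variable [DecidableEq ι] {A M : Matrix ι ι ℝ} {u : ι → ι → ℝ} {lam : ι → ℝ} {l₀ : ℝ}

lemma le_rayleighQuotient (hM : M.PosDef)
    (horth : ∀ i j, u i ⬝ᵥ M *ᵥ u j = if i = j then 1 else 0)
    (heig : ∀ i, A *ᵥ u i = lam i • (M *ᵥ u i)) (hlam : ∀ i, l₀ ≤ lam i)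
    {x : ι → ℝ} (hx : x ≠ 0) : l₀ ≤ rayleighQuotient A M x := by
  have hm : 0 < x ⬝ᵥ M *ᵥ x := by simpa using hM.dotProduct_mulVec_pos hx
  rw [rayleighQuotient, le_div_iff₀ hm, dotProduct_mulVec_eq_sum horth,
    dotProduct_mulVec_eq_sum_eigen hM.1 horth heig, mul_sum]
  exact sum_le_sum fun i _ => by gcongr; exacts [mul_self_nonneg _, hlam i]

lemma sq_dotProduct_residual_le (hM : M.PosDef)
    (horth : ∀ i j, u i ⬝ᵥ M *ᵥ u j = if i = j then 1 else 0)
    (heig : ∀ i, A *ᵥ u i = lam i • (M *ᵥ u i)) (hl₀ : 0 < l₀) (hlam : ∀ i, l₀ ≤ lam i)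
    {x : ι → ℝ} (hx : x ≠ 0) (v : ι → ℝ) :
    (v ⬝ᵥ A *ᵥ x - rayleighQuotient A M x * (v ⬝ᵥ M *ᵥ x)) ^ 2 ≤
      (v ⬝ᵥ A *ᵥ v) * (x ⬝ᵥ A *ᵥ x) * ((rayleighQuotient A M x - l₀) / l₀) := by
  have hm : 0 < x ⬝ᵥ M *ᵥ x := by simpa using hM.dotProduct_mulVec_pos hx
  set F := rayleighQuotient A M x
  have hq : x ⬝ᵥ A *ᵥ x = F * (x ⬝ᵥ M *ᵥ x) := (div_mul_cancel₀ _ hm.ne').symm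
  have hres : v ⬝ᵥ A *ᵥ x - F * (v ⬝ᵥ M *ᵥ x) =
      ∑ i, (lam i - F) * ((u i ⬝ᵥ M *ᵥ v) * (u i ⬝ᵥ M *ᵥ x)) := by
    rw [dotProduct_mulVec_eq_sum_eigen hM.1 horth heig, dotProduct_mulVec_eq_sum horth, mul_sum,
      ← sum_sub_distrib]
    exact sum_congr rfl fun i _ => by ring
  have hsum : ∑ i, (lam i - 2 * F + F ^ 2 / l₀) * ((u i ⬝ᵥ M *ᵥ x) * (u i ⬝ᵥ M *ᵥ x)) =
      (x ⬝ᵥ A *ᵥ x) * ((F - l₀) / l₀) := by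
    simp only [add_mul, sub_mul, sum_add_distrib, sum_sub_distrib, ← mul_sum, mul_assoc,
      ← dotProduct_mulVec_eq_sum horth, ← dotProduct_mulVec_eq_sum_eigen hM.1 horth heig]
    rw [hq]
    field_simp
    ring
  rw [hres, mul_assoc, ← hsum, dotProduct_mulVec_eq_sum_eigen hM.1 horth heig v v]
  exact sq_sum_sub_mul_le hl₀ hlam F

end Eigenbasis

end Matrix

lemma le_two_mul_mul_div_mul_one_sub_div {p F q G νmin l₀ ρ ϱ σ ς : ℝ} (hνmin : 0 < νmin)
    (hl₀ : 0 < l₀) (hp : νmin ≤ p) (hF : l₀ ≤ F) (hFρ : F ≤ ρ) (hq : 0 < q) (hqσ : q ≤ σ + ς)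
    (hρϱ : ρ < ϱ) (hG : ϱ ≤ G) :
    2 * νmin * l₀ / (σ + ς) * (1 - ρ / ϱ) ≤ 2 * p * F / q * (1 - F / G) := by
  have hϱ : 0 < ϱ := by linarith
  have hpF : 0 ≤ 2 * p * F := by
    have := hνmin.trans_le hp; have := hl₀.trans_le hF; positivity
  refine mul_le_mul (div_le_div₀ hpF (by nlinarith) hq hqσ) ?_ ?_ (div_nonneg hpF hq.le)
  · linarith [div_le_div₀ (by linarith) hFρ hϱ hG]
  · linarith [(div_le_one hϱ).2 hρϱ.le]

lemma two_mul_mul_div_mul_one_sub_div_le {p F q G νmax l₀ lₙ ρ σ ς : ℝ}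
    (hl₀ : 0 < l₀) (hp : 0 ≤ p) (hpν : p ≤ νmax) (hF : l₀ ≤ F) (hFρ : F ≤ ρ)
    (hςσ : ς < σ) (hqσ : σ - ς ≤ q) (hFG : F ≤ G) (hGl : G ≤ lₙ) :
    2 * p * F / q * (1 - F / G) ≤ 2 * νmax * ρ / (σ - ς) * (1 - l₀ / lₙ) := by
  have hF0 : 0 < F := hl₀.trans_le hF
  have hG : 0 < G := hF0.trans_le hFG
  refine mul_le_mul (div_le_div₀ (by nlinarith) (by nlinarith) (by linarith) hqσ) ?_ ?_ ?_
  · linarith [div_le_div₀ hF0.le hF hG hGl]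
  · linarith [(div_le_one hG).2 hFG]
  · exact div_nonneg (by nlinarith) (by linarith)

lemma abs_mul_sub_mul_le {a b F c K t : ℝ} (hF : 0 < F) (hK : 0 ≤ K) (ht : 0 ≤ t)
    (ha : |a| ≤ c * t) (hs : (a - F * b) ^ 2 ≤ K * t ^ 2) :
    |b * (a - F * b)| ≤ (K + √K * c) * t ^ 2 / F := by
  have hs' : |a - F * b| ≤ √K * t := by
    simpa [Real.sqrt_mul hK, Real.sqrt_sq ht] using Real.abs_le_sqrt hs
  have hb : F * |b| ≤ c * t + √K * t := by
    calc F * |b| = |a - (a - F * b)| := by rw [sub_sub_cancel, abs_mul, abs_of_pos hF]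
      _ ≤ |a| + |a - F * b| := abs_sub _ _
      _ ≤ c * t + √K * t := add_le_add ha hs'
  rw [le_div_iff₀ hF, abs_mul]
  calc |b| * |a - F * b| * F = (F * |b|) * |a - F * b| := by ring
    _ ≤ (c * t + √K * t) * (√K * t) :=
        mul_le_mul hb hs' (abs_nonneg _) ((mul_nonneg hF.le (abs_nonneg _)).trans hb)
    _ = (K + √K * c) * t ^ 2 := by
        linear_combination (t ^ 2) * Real.mul_self_sqrt hK

lemma abs_cross_term_le {a b F m p q c l₀ ρ νmin νmax : ℝ} (hm : 0 < m) (hq : q = F * m)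
    (hl₀ : 0 < l₀) (hF : l₀ ≤ F) (hFρ : F ≤ ρ) (hνmin : 0 < νmin) (hνq : νmin ≤ q)
    (hp : 0 ≤ p) (hpν : p ≤ νmax) (hc : 0 ≤ c) (ha : |a| ≤ c * √p * √q)
    (hs : (a - F * b) ^ 2 ≤ p * q * ((F - l₀) / l₀)) :
    |8 * b / m ^ 2 * (a - F * b)| ≤
      8 * (νmax / νmin) * ρ * ((ρ - l₀) / l₀ + √((ρ - l₀) / l₀) * c) := by
  have hF0 : 0 < F := hl₀.trans_le hF
  have hK : 0 ≤ (ρ - l₀) / l₀ := div_nonneg (by linarith) hl₀.le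
  have ht : (√p * √q) ^ 2 = p * q := by
    rw [mul_pow, Real.sq_sqrt hp, Real.sq_sqrt (by linarith)]
  have hbs := abs_mul_sub_mul_le (b := b) (K := (ρ - l₀) / l₀) (t := √p * √q) hF0 hK
    (by positivity) (by rwa [← mul_assoc]) (by
      rw [ht, mul_comm _ (p * q)]
      exact hs.trans (mul_le_mul_of_nonneg_left (by gcongr) (mul_nonneg hp (by linarith))))
  have hpm : p / m ≤ νmax * ρ / νmin := by
    have hρm : νmin ≤ ρ * m := by nlinarith
    rw [div_le_div_iff₀ hm hνmin]
    nlinarith [mul_le_mul hpν hρm hνmin.le (hp.trans hpν)]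
  calc |8 * b / m ^ 2 * (a - F * b)| = 8 / m ^ 2 * |b * (a - F * b)| := by
        rw [mul_div_right_comm, mul_assoc, abs_mul, abs_of_pos (by positivity)]
    _ ≤ 8 / m ^ 2 * (((ρ - l₀) / l₀ + √((ρ - l₀) / l₀) * c) * (√p * √q) ^ 2 / F) := by
        gcongr
    _ = 8 * ((ρ - l₀) / l₀ + √((ρ - l₀) / l₀) * c) * (p / m) := by
        rw [ht, hq]; field_simp
    _ ≤ 8 * ((ρ - l₀) / l₀ + √((ρ - l₀) / l₀) * c) * (νmax * ρ / νmin) := by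
        gcongr
    _ = 8 * (νmax / νmin) * ρ * ((ρ - l₀) / l₀ + √((ρ - l₀) / l₀) * c) := by ring

theorem statement_15_general {n : ℕ}
    (A M : Matrix (Fin (n+2)) (Fin (n+2)) ℝ)
    (hM : M.PosDef)
    (lam : Fin (n+2) → ℝ) (u : Fin (n+2) → (Fin (n+2) → ℝ))
    (hlam_pos : 0 < lam 0) (hmono : Monotone lam)
    (heig : ∀ i, A *ᵥ u i = lam i • (M *ᵥ u i))
    (horth : ∀ i j, u i ⬝ᵥ M *ᵥ u j = if i = j then 1 else 0)
    (hfn : ∀ z : Fin (n+2) → ℝ, z ≠ 0 →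
      (z ⬝ᵥ A *ᵥ z) / (z ⬝ᵥ M *ᵥ z) ≤ lam (Fin.last (n+1)))
    (νmin νmax : ℝ) (hνmin : 0 < νmin)
    (hν : ∀ z, νmin * (z ⬝ᵥ z) ≤ z ⬝ᵥ A *ᵥ z ∧ z ⬝ᵥ A *ᵥ z ≤ νmax * (z ⬝ᵥ z))
    (ρ : ℝ)
    (σ ς ϱ : ℝ)
    (hςσ : ς < σ) (hϱρ : ρ < ϱ)
    (cΘ : ℝ) (hcΘ0 : 0 ≤ cΘ)
    (hσς : ∀ y : Fin (n+2) → ℝ, y ≠ 0 → (y ⬝ᵥ A *ᵥ y) / (y ⬝ᵥ M *ᵥ y) ≤ ρ →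
      |(y ⬝ᵥ A *ᵥ y) / (y ⬝ᵥ y) - σ| ≤ ς)
    (horthbd : ∀ y w : Fin (n+2) → ℝ, y ≠ 0 → w ≠ 0 → w ⬝ᵥ y = 0 →
      (y ⬝ᵥ A *ᵥ y) / (y ⬝ᵥ M *ᵥ y) ≤ ρ →
      ϱ ≤ (w ⬝ᵥ A *ᵥ w) / (w ⬝ᵥ M *ᵥ w) ∧
        |w ⬝ᵥ A *ᵥ y| ≤ cΘ * Real.sqrt (w ⬝ᵥ A *ᵥ w) * Real.sqrt (y ⬝ᵥ A *ᵥ y))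
    (x : Fin (n+2) → ℝ) (hxunit : x ⬝ᵥ x = 1)
    (hfx : (x ⬝ᵥ A *ᵥ x) / (x ⬝ᵥ M *ᵥ x) ≤ ρ)
    (v : Fin (n+2) → ℝ) (hvunit : v ⬝ᵥ v = 1) (hvx : v ⬝ᵥ x = 0)
    (J₁ J₂ μB LB CX : ℝ)
    (hJ₁ : J₁ = 2 * (v ⬝ᵥ A *ᵥ v) * ((x ⬝ᵥ A *ᵥ x) / (x ⬝ᵥ M *ᵥ x)) / (x ⬝ᵥ A *ᵥ x) *
      (1 - ((x ⬝ᵥ A *ᵥ x) / (x ⬝ᵥ M *ᵥ x)) / ((v ⬝ᵥ A *ᵥ v) / (v ⬝ᵥ M *ᵥ v))))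
    (hJ₂ : J₂ = 8 * (v ⬝ᵥ M *ᵥ x) / (x ⬝ᵥ M *ᵥ x) ^ 2 *
      (v ⬝ᵥ (A *ᵥ x - ((x ⬝ᵥ A *ᵥ x) / (x ⬝ᵥ M *ᵥ x)) • (M *ᵥ x))))
    (hCX : CX = 8 * (νmax / νmin) * ρ *
      ((ρ - lam 0) / lam 0 + Real.sqrt ((ρ - lam 0) / lam 0) * cΘ))
    (hμB : μB = 2 * νmin * lam 0 / (σ + ς) * (1 - ρ / ϱ) - CX)
    (hLB : LB = 2 * νmax * ρ / (σ - ς) * (1 - lam 0 / lam (Fin.last (n+1))) + CX) :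
    μB ≤ J₁ - J₂ ∧ J₁ - J₂ ≤ LB := by
  have hx0 : x ≠ 0 := by rintro rfl; simp at hxunit
  have hv0 : v ≠ 0 := by rintro rfl; simp at hvunit
  have hlam : ∀ i, lam 0 ≤ lam i := fun i => hmono (Fin.zero_le i)
  have hm : 0 < x ⬝ᵥ M *ᵥ x := by simpa using hM.dotProduct_mulVec_pos hx0
  have hF : lam 0 ≤ (x ⬝ᵥ A *ᵥ x) / (x ⬝ᵥ M *ᵥ x) := le_rayleighQuotient hM horth heig hlam hx0
  have hνx : νmin ≤ x ⬝ᵥ A *ᵥ x := by simpa [hxunit] using (hν x).1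
  have hνv : νmin ≤ v ⬝ᵥ A *ᵥ v := by simpa [hvunit] using (hν v).1
  have hvν : v ⬝ᵥ A *ᵥ v ≤ νmax := by simpa [hvunit] using (hν v).2
  have hqσ := abs_le.1 (by simpa [hxunit] using hσς x hx0 hfx)
  obtain ⟨hϱG, hcross⟩ := horthbd x v hx0 hv0 hvx hfx
  have hres := sq_dotProduct_residual_le hM horth heig hlam_pos hlam hx0 v
  have hJ₂bd : |J₂| ≤ CX := by
    rw [hJ₂, hCX, dotProduct_sub, dotProduct_smul, smul_eq_mul]
    exact abs_cross_term_le hm (div_mul_cancel₀ _ hm.ne').symm hlam_pos hF hfx hνmin hνx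
      (hνmin.le.trans hνv) hvν hcΘ0 hcross hres
  obtain ⟨hJ₂lo, hJ₂hi⟩ := abs_le.1 hJ₂bd
  subst hJ₁ hμB hLB
  constructor
  · linarith [le_two_mul_mul_div_mul_one_sub_div hνmin hlam_pos hνv hF hfx
      (hνmin.trans_le hνx) (by linarith [hqσ.2] : _ ≤ σ + ς) hϱρ hϱG]
  · linarith [two_mul_mul_div_mul_one_sub_div_le hlam_pos (hνmin.le.trans hνv) hvν hF hfx hςσ
      (by linarith [hqσ.1] : σ - ς ≤ x ⬝ᵥ A *ᵥ x) (hfx.trans (hϱρ.le.trans hϱG)) (hfn v hv0)]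

/-- Two-sided bound on the Hessian quadratic form J₁ − J₂ of the preconditioned
Rayleigh quotient. -/
theorem statement_15 {n : ℕ}
    (A M : Matrix (Fin (n+2)) (Fin (n+2)) ℝ)
    (hA : A.PosDef) (hM : M.PosDef)
    (lam : Fin (n+2) → ℝ) (u : Fin (n+2) → (Fin (n+2) → ℝ))
    (hlam_pos : 0 < lam 0) (hgap : lam 0 < lam 1) (hmono : Monotone lam)
    (heig : ∀ i, A *ᵥ u i = lam i • (M *ᵥ u i))
    (horth : ∀ i j, u i ⬝ᵥ M *ᵥ u j = if i = j then 1 else 0)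
    (hfn : ∀ z : Fin (n+2) → ℝ, z ≠ 0 →
      (z ⬝ᵥ A *ᵥ z) / (z ⬝ᵥ M *ᵥ z) ≤ lam (Fin.last (n+1)))
    (νmin νmax : ℝ) (hνmin : 0 < νmin) (hνmax : 0 < νmax)
    (hν : ∀ z, νmin * (z ⬝ᵥ z) ≤ z ⬝ᵥ A *ᵥ z ∧ z ⬝ᵥ A *ᵥ z ≤ νmax * (z ⬝ᵥ z))
    (ρ : ℝ) (hρ1 : lam 0 ≤ ρ) (hρ2 : ρ < (lam 0 + lam 1) / 2)
    (σ ς ϱ : ℝ) (hσ : 0 ≤ σ) (hς : 0 ≤ ς) (hϱ : 0 ≤ ϱ)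
    (hςσ : ς < σ) (hϱρ : ρ < ϱ)
    (cΘ : ℝ) (hcΘ0 : 0 ≤ cΘ) (hcΘ1 : cΘ ≤ 1)
    (hσς : ∀ y : Fin (n+2) → ℝ, y ≠ 0 → (y ⬝ᵥ A *ᵥ y) / (y ⬝ᵥ M *ᵥ y) ≤ ρ →
      |(y ⬝ᵥ A *ᵥ y) / (y ⬝ᵥ y) - σ| ≤ ς)
    (horthbd : ∀ y w : Fin (n+2) → ℝ, y ≠ 0 → w ≠ 0 → w ⬝ᵥ y = 0 →
      (y ⬝ᵥ A *ᵥ y) / (y ⬝ᵥ M *ᵥ y) ≤ ρ →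
      ϱ ≤ (w ⬝ᵥ A *ᵥ w) / (w ⬝ᵥ M *ᵥ w) ∧
        |w ⬝ᵥ A *ᵥ y| ≤ cΘ * Real.sqrt (w ⬝ᵥ A *ᵥ w) * Real.sqrt (y ⬝ᵥ A *ᵥ y))
    (x : Fin (n+2) → ℝ) (hxunit : x ⬝ᵥ x = 1)
    (hfx : (x ⬝ᵥ A *ᵥ x) / (x ⬝ᵥ M *ᵥ x) ≤ ρ)
    (v : Fin (n+2) → ℝ) (hvunit : v ⬝ᵥ v = 1) (hvx : v ⬝ᵥ x = 0)
    (J₁ J₂ μB LB CX : ℝ)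
    (hJ₁ : J₁ = 2 * (v ⬝ᵥ A *ᵥ v) * ((x ⬝ᵥ A *ᵥ x) / (x ⬝ᵥ M *ᵥ x)) / (x ⬝ᵥ A *ᵥ x) *
      (1 - ((x ⬝ᵥ A *ᵥ x) / (x ⬝ᵥ M *ᵥ x)) / ((v ⬝ᵥ A *ᵥ v) / (v ⬝ᵥ M *ᵥ v))))
    (hJ₂ : J₂ = 8 * (v ⬝ᵥ M *ᵥ x) / (x ⬝ᵥ M *ᵥ x) ^ 2 *
      (v ⬝ᵥ (A *ᵥ x - ((x ⬝ᵥ A *ᵥ x) / (x ⬝ᵥ M *ᵥ x)) • (M *ᵥ x))))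
    (hCX : CX = 8 * (νmax / νmin) * ρ *
      ((ρ - lam 0) / lam 0 + Real.sqrt ((ρ - lam 0) / lam 0) * cΘ))
    (hμB : μB = 2 * νmin * lam 0 / (σ + ς) * (1 - ρ / ϱ) - CX)
    (hLB : LB = 2 * νmax * ρ / (σ - ς) * (1 - lam 0 / lam (Fin.last (n+1))) + CX) :
    μB ≤ J₁ - J₂ ∧ J₁ - J₂ ≤ LB :=
  statement_15_general A M hM lam u hlam_pos hmono heig horth hfn νmin νmax hνmin hν ρ σ ς ϱ hςσ hϱρ
    cΘ hcΘ0 hσς horthbd x hxunit hfx v hvunit hvx J₁ J₂ μB LB CX hJ₁ hJ₂ hCX hμB hLB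
end

section
/- Suppose for each i = 1,…,N: (i) local stability ‖R_iᵀv_i‖²_A ≤ ω·v_iᵀB_iv_i holds for all v_i ∈ ℝ^{n_i}; (ii) v_iᵀB_i⁻¹v_i ≤ C_P·‖v_i‖² for all v_i; and suppose additionally (iii) ‖Σ_{i=1}^N R_iᵀv_i‖²_A ≤ N₀·Σ_{i=1}^N ‖R_iᵀv_i‖²_A for every choice of v_i ∈ ℝ^{n_i}, and (iv) Σ_{i=1}^N ‖R_i u‖² ≤ C_a·‖u‖² for all u ∈ ℝⁿ. Then the local part of the additive Schwarz preconditioner, B_L⁻¹ = Σ_{i=1}^N R_iᵀB_i⁻¹R_i, satisfies ‖B_L⁻¹u‖²_A ≤ ω·N₀·C_a·C_P·‖u‖² for every u ∈ ℝⁿ. -/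
open Matrix

/-- Estimate for the local part of the additive Schwarz preconditioner. -/
theorem statement_17 {n N : ℕ} (ni : Fin N → ℕ)
    (A : Matrix (Fin n) (Fin n) ℝ) (hA : A.PosDef)
    (Rt : ∀ i : Fin N, Matrix (Fin n) (Fin (ni i)) ℝ)
    (B : ∀ i : Fin N, Matrix (Fin (ni i)) (Fin (ni i)) ℝ)
    (hB : ∀ i, (B i).PosDef)
    (ω CP N₀ Ca : ℝ) (hω : 0 < ω) (hCP : 0 < CP) (hN₀ : 0 < N₀) (hCa : 0 < Ca)
    (hstab : ∀ (i : Fin N) (vi : Fin (ni i) → ℝ),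
      (Rt i *ᵥ vi) ⬝ᵥ A *ᵥ (Rt i *ᵥ vi) ≤ ω * (vi ⬝ᵥ B i *ᵥ vi))
    (hBinv : ∀ (i : Fin N) (vi : Fin (ni i) → ℝ),
      vi ⬝ᵥ (B i)⁻¹ *ᵥ vi ≤ CP * (vi ⬝ᵥ vi))
    (hcover : ∀ v : (i : Fin N) → (Fin (ni i) → ℝ),
      (∑ i, Rt i *ᵥ v i) ⬝ᵥ A *ᵥ (∑ i, Rt i *ᵥ v i) ≤
        N₀ * ∑ i, (Rt i *ᵥ v i) ⬝ᵥ A *ᵥ (Rt i *ᵥ v i))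
    (hCa2 : ∀ u : Fin n → ℝ, ∑ i, ((Rt i)ᵀ *ᵥ u) ⬝ᵥ ((Rt i)ᵀ *ᵥ u) ≤ Ca * (u ⬝ᵥ u))
    (u : Fin n → ℝ) :
    (∑ i, Rt i *ᵥ ((B i)⁻¹ *ᵥ ((Rt i)ᵀ *ᵥ u))) ⬝ᵥ A *ᵥ
        (∑ i, Rt i *ᵥ ((B i)⁻¹ *ᵥ ((Rt i)ᵀ *ᵥ u))) ≤
      ω * N₀ * Ca * CP * (u ⬝ᵥ u) := by
  set v : (i : Fin N) → (Fin (ni i) → ℝ) := fun i => (B i)⁻¹ *ᵥ ((Rt i)ᵀ *ᵥ u) with hv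
  have key : ∀ i : Fin N, v i ⬝ᵥ B i *ᵥ v i = ((Rt i)ᵀ *ᵥ u) ⬝ᵥ (B i)⁻¹ *ᵥ ((Rt i)ᵀ *ᵥ u) := by
    intro i
    have hinv : B i * (B i)⁻¹ = 1 := Matrix.mul_nonsing_inv _ (hB i).det_pos.ne'.isUnit
    have : B i *ᵥ v i = (Rt i)ᵀ *ᵥ u := by
      rw [hv]
      simp only [Matrix.mulVec_mulVec, ← Matrix.mul_assoc, hinv, Matrix.one_mul]
    rw [this, dotProduct_comm]
  calc (∑ i, Rt i *ᵥ v i) ⬝ᵥ A *ᵥ (∑ i, Rt i *ᵥ v i)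
      ≤ N₀ * ∑ i, (Rt i *ᵥ v i) ⬝ᵥ A *ᵥ (Rt i *ᵥ v i) := hcover v
    _ ≤ N₀ * ∑ i, ω * (v i ⬝ᵥ B i *ᵥ v i) := by
        apply mul_le_mul_of_nonneg_left _ hN₀.le
        exact Finset.sum_le_sum fun i _ => hstab i (v i)
    _ = ω * N₀ * ∑ i, ((Rt i)ᵀ *ᵥ u) ⬝ᵥ (B i)⁻¹ *ᵥ ((Rt i)ᵀ *ᵥ u) := by
        rw [← Finset.mul_sum]
        ring_nf
        congr 1
        exact Finset.sum_congr rfl fun i _ => key i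
    _ ≤ ω * N₀ * ∑ i, CP * (((Rt i)ᵀ *ᵥ u) ⬝ᵥ ((Rt i)ᵀ *ᵥ u)) := by
        apply mul_le_mul_of_nonneg_left _ (by positivity)
        exact Finset.sum_le_sum fun i _ => hBinv i _
    _ = ω * N₀ * CP * ∑ i, ((Rt i)ᵀ *ᵥ u) ⬝ᵥ ((Rt i)ᵀ *ᵥ u) := by
        rw [← Finset.mul_sum]; ring
    _ ≤ ω * N₀ * CP * (Ca * (u ⬝ᵥ u)) := by
        apply mul_le_mul_of_nonneg_left (hCa2 u) (by positivity)
    _ = ω * N₀ * Ca * CP * (u ⬝ᵥ u) := by ring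
end

section
/- Suppose ω ≥ 1 and the hypotheses of the coarse and local estimates hold: (i) (R₀ᵀv₀)ᵀ(R₀ᵀw₀) = v₀ᵀw₀ for all v₀, w₀; (ii) ‖R₀ᵀv₀‖²_A ≤ ω·v₀ᵀB₀v₀ for all v₀; (iii) λ₁‖w‖² ≤ ‖w‖²_A for all w; (iv) A u₁ = λ₁u₁ with ‖u₁‖_A = 1; (v) B₀u₀ = λ₀u₀ with ‖u₀‖ = 1 and w₀ᵀB₀⁻¹w₀ ≤ λ₀⁻¹‖w₀‖² for all w₀; (vi) for i = 1,…,N, ‖R_iᵀv_i‖²_A ≤ ω·v_iᵀB_iv_i and v_iᵀB_i⁻¹v_i ≤ C_P‖v_i‖² for all v_i, ‖Σ_i R_iᵀv_i‖²_A ≤ N₀·Σ_i‖R_iᵀv_i‖²_A for all choices of v_i, and Σ_i‖R_iu‖² ≤ C_a‖u‖² for all u. Let C = R₀ᵀB₀⁻¹R₀ + Σ_{i=1}^N R_iᵀB_i⁻¹R_i be the additive Schwarz preconditioner (C = B⁻¹), assumed positive definite. Then ν₁ := u₁ᵀA C A u₁ / (u₁ᵀA u₁) satisfies ν₁ ≤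 λ₀⁻¹λ₁·(ω·λ₁^{−1/2} + 1)·C_c + λ₁^{1/2}·(ω·N₀·C_a·C_P)^{1/2} + λ₀⁻¹λ₁, where C_c = min over α ∈ ℝ of ‖u₁ − α·R₀ᵀu₀‖_A. -/
/-!
With `g = A u₁ = λ₁ u₁` we have `ν₁ = gᵀ C g`, which splits into a coarse part
`(R₀ g)ᵀ B₀⁻¹ (R₀ g)` and a local part `S = Σᵢ (Rᵢ g)ᵀ Bᵢ⁻¹ (Rᵢ g)`; the Poincaré inequality gives
`‖g‖² ≤ λ₁`. Since `R₀ᵀ` is an isometry, the coarse part is at most `λ₀⁻¹ ‖g‖² ≤ λ₀⁻¹ λ₁`.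
The local part is bounded in two ways: `S ≤ C_P C_a ‖g‖²` by the local Poincaré constants, and,
writing `S = u₁ᵀ A z` with `z = Σᵢ Rᵢᵀ Bᵢ⁻¹ Rᵢ g`, Cauchy–Schwarz in the `A`-inner product together
with stability and finite covering gives `S² ≤ ‖z‖²_A ≤ N₀ ω S`. Hence
`S ≤ √(λ₁ ω N₀ C_a C_P)`, and the term of the bound carrying `C_c` is nonnegative.
-/

open Matrix

namespace Matrix

variable {m k : Type*} [Fintype m] [Fintype k]

theorem transpose_mulVec_dotProduct {α : Type*} [CommSemiring α] (M : Matrix m k α)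
    (x : m → α) (y : k → α) : (Mᵀ *ᵥ x) ⬝ᵥ y = x ⬝ᵥ M *ᵥ y := by
  rw [mulVec_transpose, ← dotProduct_mulVec]

theorem dotProduct_mul_mul_transpose_mulVec {α : Type*} [CommSemiring α] (M : Matrix m k α)
    (B : Matrix k k α) (x : m → α) :
    x ⬝ᵥ (M * B * Mᵀ) *ᵥ x = (Mᵀ *ᵥ x) ⬝ᵥ B *ᵥ (Mᵀ *ᵥ x) := by
  rw [transpose_mulVec_dotProduct, mulVec_mulVec, mulVec_mulVec, Matrix.mul_assoc]

theorem PosSemidef.mulVec_dotProduct {A : Matrix m m ℝ} (hA : A.PosSemidef) (x y : m → ℝ) :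
    (A *ᵥ x) ⬝ᵥ y = x ⬝ᵥ A *ᵥ y := by
  conv_lhs => rw [← show Aᵀ = A from hA.1]
  exact transpose_mulVec_dotProduct A x y

theorem PosSemidef.dotProduct_mulVec_sq_le {A : Matrix m m ℝ} (hA : A.PosSemidef)
    (x y : m → ℝ) : (x ⬝ᵥ A *ᵥ y) ^ 2 ≤ (x ⬝ᵥ A *ᵥ x) * (y ⬝ᵥ A *ᵥ y) := by
  classical
  have h := (toBilin' A).apply_mul_apply_le_of_forall_zero_le
    (fun v => by simpa [toBilin'_apply'] using hA.dotProduct_mulVec_nonneg v) x y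
  have hsymm : y ⬝ᵥ A *ᵥ x = x ⬝ᵥ A *ᵥ y := by rw [← hA.mulVec_dotProduct, dotProduct_comm]
  simp only [toBilin'_apply', hsymm] at h
  rwa [← sq] at h

theorem dotProduct_sq_le (x y : m → ℝ) : (x ⬝ᵥ y) ^ 2 ≤ (x ⬝ᵥ x) * (y ⬝ᵥ y) := by
  classical
  simpa using (PosSemidef.one (n := m) (R := ℝ)).dotProduct_mulVec_sq_le x y

theorem dotProduct_self_transpose_mulVec_le {M : Matrix m k ℝ}
    (hM : ∀ v, (M *ᵥ v) ⬝ᵥ (M *ᵥ v) = v ⬝ᵥ v) (x : m → ℝ) :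
    (Mᵀ *ᵥ x) ⬝ᵥ (Mᵀ *ᵥ x) ≤ x ⬝ᵥ x := by
  set y := Mᵀ *ᵥ x
  have hy : y ⬝ᵥ y = x ⬝ᵥ M *ᵥ y := transpose_mulVec_dotProduct M x y
  have hcs : (y ⬝ᵥ y) ^ 2 ≤ (x ⬝ᵥ x) * (y ⬝ᵥ y) := by
    simpa only [← hy, hM] using dotProduct_sq_le x (M *ᵥ y)
  by_contra! hlt
  have hx : 0 ≤ x ⬝ᵥ x := by simpa using dotProduct_self_star_nonneg x
  nlinarith [mul_lt_mul_of_pos_right hlt (hx.trans_lt hlt)]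

theorem PosDef.dotProduct_inv_mulVec_nonneg [DecidableEq k] {B : Matrix k k ℝ} (hB : B.PosDef)
    (w : k → ℝ) : 0 ≤ w ⬝ᵥ B⁻¹ *ᵥ w := by
  simpa using hB.inv.posSemidef.dotProduct_mulVec_nonneg w

theorem sum_dotProduct_inv_mulVec_le_of_stable_of_cover {ι : Type*} [Fintype ι]
    {κ : ι → Type*} [∀ i, Fintype (κ i)] [∀ i, DecidableEq (κ i)]
    {A : Matrix m m ℝ} (hA : A.PosSemidef) (R : ∀ i, Matrix m (κ i) ℝ)
    {B : ∀ i, Matrix (κ i) (κ i) ℝ} (hB : ∀ i, (B i).PosDef) {ω N₀ : ℝ}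
    (hω : 0 ≤ ω) (hN₀ : 0 ≤ N₀)
    (hstab : ∀ i v, (R i *ᵥ v) ⬝ᵥ A *ᵥ (R i *ᵥ v) ≤ ω * (v ⬝ᵥ B i *ᵥ v))
    (hcover : ∀ v : (i : ι) → κ i → ℝ, (∑ i, R i *ᵥ v i) ⬝ᵥ A *ᵥ (∑ i, R i *ᵥ v i) ≤
      N₀ * ∑ i, (R i *ᵥ v i) ⬝ᵥ A *ᵥ (R i *ᵥ v i))
    (u : m → ℝ) :
    ∑ i, ((R i)ᵀ *ᵥ (A *ᵥ u)) ⬝ᵥ (B i)⁻¹ *ᵥ ((R i)ᵀ *ᵥ (A *ᵥ u)) ≤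
      N₀ * ω * (u ⬝ᵥ A *ᵥ u) := by
  set w : ∀ i, κ i → ℝ := fun i => (R i)ᵀ *ᵥ (A *ᵥ u)
  set v : ∀ i, κ i → ℝ := fun i => (B i)⁻¹ *ᵥ w i
  set S := ∑ i, w i ⬝ᵥ v i
  set z := ∑ i, R i *ᵥ v i
  have hS : S = u ⬝ᵥ A *ᵥ z := by
    simp only [S, z, dotProduct_sum, ← hA.mulVec_dotProduct, ← transpose_mulVec_dotProduct, w]
  have hBv : ∀ i, v i ⬝ᵥ B i *ᵥ v i = w i ⬝ᵥ v i := fun i => by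
    rw [mulVec_mulVec, mul_nonsing_inv _ ((isUnit_iff_isUnit_det _).mp (hB i).isUnit),
      one_mulVec, dotProduct_comm]
  have hz : z ⬝ᵥ A *ᵥ z ≤ N₀ * ω * S := calc
    z ⬝ᵥ A *ᵥ z ≤ N₀ * ∑ i, (R i *ᵥ v i) ⬝ᵥ A *ᵥ (R i *ᵥ v i) := hcover v
    _ ≤ N₀ * ∑ i, ω * (w i ⬝ᵥ v i) := by
      gcongr with i
      exact (hstab i (v i)).trans_eq (by rw [hBv])
    _ = N₀ * ω * S := by rw [← Finset.mul_sum, mul_assoc]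
  have hSnonneg : 0 ≤ S := Finset.sum_nonneg fun i _ => (hB i).dotProduct_inv_mulVec_nonneg (w i)
  have huA : 0 ≤ u ⬝ᵥ A *ᵥ u := by simpa using hA.dotProduct_mulVec_nonneg u
  have hsq : S * S ≤ (N₀ * ω * (u ⬝ᵥ A *ᵥ u)) * S := calc
    S * S ≤ (u ⬝ᵥ A *ᵥ u) * (z ⬝ᵥ A *ᵥ z) := by
      rw [← sq, hS]; exact hA.dotProduct_mulVec_sq_le u z
    _ ≤ (u ⬝ᵥ A *ᵥ u) * (N₀ * ω * S) := by gcongr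
    _ = (N₀ * ω * (u ⬝ᵥ A *ᵥ u)) * S := by ring
  rcases hSnonneg.eq_or_lt with hS0 | hSpos
  · rw [← hS0]; positivity
  · exact le_of_mul_le_mul_right hsq hSpos

theorem sum_dotProduct_inv_mulVec_le_of_poincare {ι : Type*} [Fintype ι]
    {κ : ι → Type*} [∀ i, Fintype (κ i)] [∀ i, DecidableEq (κ i)]
    (R : ∀ i, Matrix m (κ i) ℝ) (B : ∀ i, Matrix (κ i) (κ i) ℝ) {CP Ca : ℝ} (hCP : 0 ≤ CP)
    (hBinv : ∀ i v, v ⬝ᵥ (B i)⁻¹ *ᵥ v ≤ CP * (v ⬝ᵥ v))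
    (hCa : ∀ w, ∑ i, ((R i)ᵀ *ᵥ w) ⬝ᵥ ((R i)ᵀ *ᵥ w) ≤ Ca * (w ⬝ᵥ w)) (g : m → ℝ) :
    ∑ i, ((R i)ᵀ *ᵥ g) ⬝ᵥ (B i)⁻¹ *ᵥ ((R i)ᵀ *ᵥ g) ≤ CP * Ca * (g ⬝ᵥ g) := calc
  _ ≤ ∑ i, CP * (((R i)ᵀ *ᵥ g) ⬝ᵥ ((R i)ᵀ *ᵥ g)) := Finset.sum_le_sum fun i _ => hBinv i _
  _ = CP * ∑ i, ((R i)ᵀ *ᵥ g) ⬝ᵥ ((R i)ᵀ *ᵥ g) := (Finset.mul_sum ..).symm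
  _ ≤ CP * (Ca * (g ⬝ᵥ g)) := by gcongr; exact hCa g
  _ = CP * Ca * (g ⬝ᵥ g) := (mul_assoc ..).symm

end Matrix

theorem Real.le_sqrt_mul_of_le_of_le {x a b : ℝ} (hx : 0 ≤ x) (ha : x ≤ a) (hb : x ≤ b) :
    x ≤ √(a * b) :=
  Real.le_sqrt_of_sq_le (sq x ▸ mul_le_mul ha hb hx (hx.trans ha))

theorem statement_18_general {n n₀ N : ℕ} (ni : Fin N → ℕ)
    (A : Matrix (Fin n) (Fin n) ℝ) (hA : A.PosDef)
    (lam₁ : ℝ) (hlam₁ : 0 < lam₁)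
    (R0t : Matrix (Fin n) (Fin n₀) ℝ)
    (B0 : Matrix (Fin n₀) (Fin n₀) ℝ)
    (Rt : ∀ i : Fin N, Matrix (Fin n) (Fin (ni i)) ℝ)
    (B : ∀ i : Fin N, Matrix (Fin (ni i)) (Fin (ni i)) ℝ)
    (hB : ∀ i, (B i).PosDef)
    (ω lam₀ CP N₀ Ca : ℝ) (hω : 1 ≤ ω) (hlam₀ : 0 < lam₀)
    (hCP : 0 < CP) (hN₀ : 0 < N₀) (hCa : 0 < Ca)
    (u₁ : Fin n → ℝ) (u₀ : Fin n₀ → ℝ)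
    (hiso : ∀ v₀ w₀ : Fin n₀ → ℝ, (R0t *ᵥ v₀) ⬝ᵥ (R0t *ᵥ w₀) = v₀ ⬝ᵥ w₀)
    (hpoin : ∀ w : Fin n → ℝ, lam₁ * (w ⬝ᵥ w) ≤ w ⬝ᵥ A *ᵥ w)
    (heig : A *ᵥ u₁ = lam₁ • u₁) (hu₁A : u₁ ⬝ᵥ A *ᵥ u₁ = 1)
    (hB0inv : ∀ w₀ : Fin n₀ → ℝ, w₀ ⬝ᵥ B0⁻¹ *ᵥ w₀ ≤ lam₀⁻¹ * (w₀ ⬝ᵥ w₀))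
    (hstab : ∀ (i : Fin N) (vi : Fin (ni i) → ℝ),
      (Rt i *ᵥ vi) ⬝ᵥ A *ᵥ (Rt i *ᵥ vi) ≤ ω * (vi ⬝ᵥ B i *ᵥ vi))
    (hBinv : ∀ (i : Fin N) (vi : Fin (ni i) → ℝ),
      vi ⬝ᵥ (B i)⁻¹ *ᵥ vi ≤ CP * (vi ⬝ᵥ vi))
    (hcover : ∀ v : (i : Fin N) → (Fin (ni i) → ℝ),
      (∑ i, Rt i *ᵥ v i) ⬝ᵥ A *ᵥ (∑ i, Rt i *ᵥ v i) ≤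
        N₀ * ∑ i, (Rt i *ᵥ v i) ⬝ᵥ A *ᵥ (Rt i *ᵥ v i))
    (hCa2 : ∀ w : Fin n → ℝ, ∑ i, ((Rt i)ᵀ *ᵥ w) ⬝ᵥ ((Rt i)ᵀ *ᵥ w) ≤ Ca * (w ⬝ᵥ w))
    (C : Matrix (Fin n) (Fin n) ℝ)
    (hC : C = R0t * B0⁻¹ * R0tᵀ + ∑ i, Rt i * (B i)⁻¹ * (Rt i)ᵀ)
    (ν₁ : ℝ) (hν₁ : ν₁ = (u₁ ⬝ᵥ (A * C * A) *ᵥ u₁) / (u₁ ⬝ᵥ A *ᵥ u₁))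
    (Cc : ℝ)
    (hCc : Cc = ⨅ α : ℝ, Real.sqrt
      ((u₁ - α • (R0t *ᵥ u₀)) ⬝ᵥ A *ᵥ (u₁ - α • (R0t *ᵥ u₀)))) :
    ν₁ ≤ lam₀⁻¹ * lam₁ * (ω / Real.sqrt lam₁ + 1) * Cc +
        Real.sqrt lam₁ * Real.sqrt (ω * N₀ * Ca * CP) + lam₀⁻¹ * lam₁ := by
  have hACA : u₁ ⬝ᵥ (A * C * A) *ᵥ u₁ = (A *ᵥ u₁) ⬝ᵥ C *ᵥ (A *ᵥ u₁) := by
    simpa only [show Aᵀ = A from hA.1] using dotProduct_mul_mul_transpose_mulVec A C u₁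
  set g := A *ᵥ u₁
  set S := ∑ i, ((Rt i)ᵀ *ᵥ g) ⬝ᵥ (B i)⁻¹ *ᵥ ((Rt i)ᵀ *ᵥ g)
  have hν : ν₁ = (R0tᵀ *ᵥ g) ⬝ᵥ B0⁻¹ *ᵥ (R0tᵀ *ᵥ g) + S := by
    rw [hν₁, hu₁A, div_one, hACA, hC, add_mulVec, sum_mulVec, dotProduct_add, dotProduct_sum]
    simp only [dotProduct_mul_mul_transpose_mulVec, S]
  have hgg : g ⬝ᵥ g ≤ lam₁ := calc
    g ⬝ᵥ g = lam₁ * (lam₁ * (u₁ ⬝ᵥ u₁)) := by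
      rw [heig, smul_dotProduct, dotProduct_smul, smul_eq_mul, smul_eq_mul]
    _ ≤ lam₁ * 1 := by gcongr; exact (hpoin u₁).trans_eq hu₁A
    _ = lam₁ := mul_one lam₁
  have hcoarse : (R0tᵀ *ᵥ g) ⬝ᵥ B0⁻¹ *ᵥ (R0tᵀ *ᵥ g) ≤ lam₀⁻¹ * lam₁ := calc
    _ ≤ lam₀⁻¹ * ((R0tᵀ *ᵥ g) ⬝ᵥ (R0tᵀ *ᵥ g)) := hB0inv _
    _ ≤ lam₀⁻¹ * lam₁ := by
      gcongr
      exact (dotProduct_self_transpose_mulVec_le (fun v => hiso v v) g).trans hgg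
  have hS_stab : S ≤ N₀ * ω := by
    refine (sum_dotProduct_inv_mulVec_le_of_stable_of_cover hA.posSemidef Rt hB
      (by linarith) hN₀.le hstab hcover u₁).trans_eq ?_
    rw [hu₁A, mul_one]
  have hS_poin : S ≤ CP * Ca * lam₁ :=
    (sum_dotProduct_inv_mulVec_le_of_poincare Rt B hCP.le hBinv hCa2 g).trans (by gcongr)
  have hS : S ≤ Real.sqrt lam₁ * Real.sqrt (ω * N₀ * Ca * CP) := by
    rw [← Real.sqrt_mul hlam₁.le]
    convert Real.le_sqrt_mul_of_le_of_le
      (Finset.sum_nonneg fun i _ => (hB i).dotProduct_inv_mulVec_nonneg _) hS_stab hS_poin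
      using 2
    ring
  have hCc_nonneg : 0 ≤ Cc := hCc ▸ Real.iInf_nonneg fun _ => Real.sqrt_nonneg _
  have : 0 ≤ lam₀⁻¹ * lam₁ * (ω / Real.sqrt lam₁ + 1) * Cc := by positivity
  linarith

/-- Bound on ν₁ for the additive Schwarz preconditioner. -/
theorem statement_18 {n n₀ N : ℕ} (ni : Fin N → ℕ)
    (A : Matrix (Fin n) (Fin n) ℝ) (hA : A.PosDef)
    (lam₁ : ℝ) (hlam₁ : 0 < lam₁)
    (R0t : Matrix (Fin n) (Fin n₀) ℝ)
    (B0 : Matrix (Fin n₀) (Fin n₀) ℝ) (hB0 : B0.PosDef)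
    (Rt : ∀ i : Fin N, Matrix (Fin n) (Fin (ni i)) ℝ)
    (B : ∀ i : Fin N, Matrix (Fin (ni i)) (Fin (ni i)) ℝ)
    (hB : ∀ i, (B i).PosDef)
    (ω lam₀ CP N₀ Ca : ℝ) (hω : 1 ≤ ω) (hlam₀ : 0 < lam₀)
    (hCP : 0 < CP) (hN₀ : 0 < N₀) (hCa : 0 < Ca)
    (u₁ : Fin n → ℝ) (u₀ : Fin n₀ → ℝ)
    (hiso : ∀ v₀ w₀ : Fin n₀ → ℝ, (R0t *ᵥ v₀) ⬝ᵥ (R0t *ᵥ w₀) = v₀ ⬝ᵥ w₀)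
    (hstab0 : ∀ v₀ : Fin n₀ → ℝ, (R0t *ᵥ v₀) ⬝ᵥ A *ᵥ (R0t *ᵥ v₀) ≤ ω * (v₀ ⬝ᵥ B0 *ᵥ v₀))
    (hpoin : ∀ w : Fin n → ℝ, lam₁ * (w ⬝ᵥ w) ≤ w ⬝ᵥ A *ᵥ w)
    (heig : A *ᵥ u₁ = lam₁ • u₁) (hu₁A : u₁ ⬝ᵥ A *ᵥ u₁ = 1)
    (heig₀ : B0 *ᵥ u₀ = lam₀ • u₀) (hu₀ : u₀ ⬝ᵥ u₀ = 1)
    (hB0inv : ∀ w₀ : Fin n₀ → ℝ, w₀ ⬝ᵥ B0⁻¹ *ᵥ w₀ ≤ lam₀⁻¹ * (w₀ ⬝ᵥ w₀))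
    (hstab : ∀ (i : Fin N) (vi : Fin (ni i) → ℝ),
      (Rt i *ᵥ vi) ⬝ᵥ A *ᵥ (Rt i *ᵥ vi) ≤ ω * (vi ⬝ᵥ B i *ᵥ vi))
    (hBinv : ∀ (i : Fin N) (vi : Fin (ni i) → ℝ),
      vi ⬝ᵥ (B i)⁻¹ *ᵥ vi ≤ CP * (vi ⬝ᵥ vi))
    (hcover : ∀ v : (i : Fin N) → (Fin (ni i) → ℝ),
      (∑ i, Rt i *ᵥ v i) ⬝ᵥ A *ᵥ (∑ i, Rt i *ᵥ v i) ≤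
        N₀ * ∑ i, (Rt i *ᵥ v i) ⬝ᵥ A *ᵥ (Rt i *ᵥ v i))
    (hCa2 : ∀ w : Fin n → ℝ, ∑ i, ((Rt i)ᵀ *ᵥ w) ⬝ᵥ ((Rt i)ᵀ *ᵥ w) ≤ Ca * (w ⬝ᵥ w))
    (C : Matrix (Fin n) (Fin n) ℝ)
    (hC : C = R0t * B0⁻¹ * R0tᵀ + ∑ i, Rt i * (B i)⁻¹ * (Rt i)ᵀ)
    (hCpd : C.PosDef)
    (ν₁ : ℝ) (hν₁ : ν₁ = (u₁ ⬝ᵥ (A * C * A) *ᵥ u₁) / (u₁ ⬝ᵥ A *ᵥ u₁))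
    (Cc : ℝ)
    (hCc : Cc = ⨅ α : ℝ, Real.sqrt
      ((u₁ - α • (R0t *ᵥ u₀)) ⬝ᵥ A *ᵥ (u₁ - α • (R0t *ᵥ u₀)))) :
    ν₁ ≤ lam₀⁻¹ * lam₁ * (ω / Real.sqrt lam₁ + 1) * Cc +
        Real.sqrt lam₁ * Real.sqrt (ω * N₀ * Ca * CP) + lam₀⁻¹ * lam₁ :=
  statement_18_general ni A hA lam₁ hlam₁ R0t B0 Rt B hB ω lam₀ CP N₀ Ca hω hlam₀ hCP hN₀ hCa u₁ u₀
    hiso hpoin heig hu₁A hB0inv hstab hBinv hcover hCa2 C hC ν₁ hν₁ Cc hCc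
end
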